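/- arXiv:hep-th/9306137 — 4 statements merged into one kernel-verified Lean document; each statement's English description precedes it below -/
import Mathlib

section
/- Let q ∈ ℂ with q ∉ {0, 1, -1}, let V be a ℂ-vector space, and let E, F, K, K' be linear endomorphisms of V with K∘K' = K'∘K = id, K∘E∘K' = q^2 • E, K∘F∘K' = q^{-2} • F, and E∘F - F∘E = (q - q^{-1})^{-1} • (K - K'). If n is a natural number and v ∈ V satisfies E v = 0 and K v = q^n • v (hence K' v = q^{-n} • v), then E (F^(n+1) v) = 0. -/
/-- Quantum singular vector: if `E, F, K, K'` are endomorphisms of a complex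
vector space satisfying the `U_q(sl₂)` relations and `v` satisfies `E v = 0`
and `K v = q^n • v`, then `E (F^(n+1) v) = 0`. -/
theorem stmt_3 (q : ℂ) (hq0 : q ≠ 0) (hq1 : q ≠ 1) (hqm1 : q ≠ -1)
    (V : Type*) [AddCommGroup V] [Module ℂ V]
    (E F K K' : Module.End ℂ V)
    (hKK' : K * K' = 1) (hK'K : K' * K = 1)
    (hKE : K * E * K' = (q ^ 2) • E)
    (hKF : K * F * K' = (q ^ (-2 : ℤ)) • F)
    (hEF : E * F - F * E = (q - q⁻¹)⁻¹ • (K - K'))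
    (n : ℕ) (v : V) (hv1 : E v = 0) (hv2 : K v = (q ^ (n : ℤ)) • v) :
    E ((F ^ (n + 1)) v) = 0 := by
  -- K F = q^{-2} F K
  have hKFc : K * F = (q ^ (-2:ℤ)) • (F * K) := by
    have h := congrArg (· * K) hKF
    simpa [mul_assoc, hK'K, smul_mul_assoc] using h
  -- K' F = q^2 F K'
  have hK'Fc : K' * F = (q ^ (2:ℤ)) • (F * K') := by
    have h1 : F * K' = (q ^ (-2:ℤ)) • (K' * F) := by
      have h := congrArg (fun X => K' * X) hKF
      simp only [mul_smul_comm] at h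
      rw [show K' * (K * F * K') = F * K' from by
        rw [← mul_assoc, ← mul_assoc, hK'K, one_mul]] at h
      exact h
    have h2 : (q ^ (2:ℤ)) • (F * K') = (q ^ (2:ℤ) * q ^ (-2:ℤ)) • (K' * F) := by
      rw [h1, smul_smul]
    rw [← zpow_add₀ hq0] at h2
    norm_num at h2
    exact h2.symm
  -- K' v
  have hv2' : K' v = (q ^ (-(n:ℤ))) • v := by
    have h := congrArg K' hv2
    have h2 : (K' * K) v = (q ^ (n:ℤ)) • K' v := by
      simpa [Module.End.mul_apply, map_smul] using h
    rw [hK'K] at h2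
    have := congrArg (fun w => (q ^ (-(n:ℤ))) • w) h2
    simp only [smul_smul, ← zpow_add₀ hq0] at this
    simpa [zpow_neg] using this.symm
  -- K on F^m v
  have hKFm : ∀ m : ℕ, K ((F ^ m) v) = (q ^ ((n:ℤ) - 2*m)) • (F ^ m) v := by
    intro m; induction m with
    | zero => simpa using hv2
    | succ m ih =>
      have : K ((F ^ (m+1)) v) = (K * F) ((F ^ m) v) := by
        rw [pow_succ']; simp [Module.End.mul_apply]
      rw [this, hKFc]
      simp only [LinearMap.smul_apply, Module.End.mul_apply, ih, map_smul, smul_smul,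
        ← zpow_add₀ hq0]
      rw [pow_succ']
      simp only [Module.End.mul_apply]
      congr 1
      push_cast; ring_nf
  have hK'Fm : ∀ m : ℕ, K' ((F ^ m) v) = (q ^ (2*(m:ℤ) - n)) • (F ^ m) v := by
    intro m; induction m with
    | zero => simpa using hv2'
    | succ m ih =>
      have : K' ((F ^ (m+1)) v) = (K' * F) ((F ^ m) v) := by
        rw [pow_succ']; simp [Module.End.mul_apply]
      rw [this, hK'Fc]
      simp only [LinearMap.smul_apply, Module.End.mul_apply, ih, map_smul, smul_smul,
        ← zpow_add₀ hq0]
      rw [pow_succ']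
      simp only [Module.End.mul_apply]
      congr 1
      push_cast; ring_nf
  -- commutator applied to a vector
  have hEFw : ∀ w : V, E (F w) = F (E w) + (q - q⁻¹)⁻¹ • (K w - K' w) := by
    intro w
    have h := congrArg (fun X => X w) hEF
    simp only [LinearMap.sub_apply, Module.End.mul_apply, LinearMap.smul_apply] at h
    linear_combination (norm := module) h
  -- main induction
  have key : ∀ m : ℕ, E ((F ^ (m+1)) v) =
      ((q - q⁻¹)⁻¹ * ∑ j ∈ Finset.range (m+1),
        (q ^ ((n:ℤ) - 2*j) - q ^ (2*(j:ℤ) - n))) • (F ^ m) v := by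
    intro m; induction m with
    | zero =>
      have h1 : (F ^ (0+1)) v = F v := by simp
      rw [h1, hEFw v, hv1, map_zero, hv2, hv2', ← sub_smul, smul_smul]
      simp only [pow_zero, Module.End.one_apply, Finset.sum_range_one, Nat.cast_zero,
        mul_zero, sub_zero, zero_sub, zero_add]
    | succ m ih =>
      have h1 : (F ^ (m+2)) v = F ((F ^ (m+1)) v) := by
        rw [pow_succ']; simp [Module.End.mul_apply]
      rw [h1, hEFw, ih, hKFm (m+1), hK'Fm (m+1), map_smul]
      rw [← sub_smul, smul_smul]
      have h2 : F ((F ^ m) v) = (F ^ (m+1)) v := by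
        rw [pow_succ']; simp [Module.End.mul_apply]
      rw [h2, ← add_smul]
      congr 1
      conv_rhs => rw [Finset.sum_range_succ]
      push_cast
      ring
  -- the scalar vanishes at m = n
  have hsum : ∑ j ∈ Finset.range (n+1),
      (q ^ ((n:ℤ) - 2*j) - q ^ (2*(j:ℤ) - n)) = 0 := by
    rw [Finset.sum_sub_distrib, sub_eq_zero]
    rw [← Finset.sum_range_reflect (fun j => q ^ (2*(j:ℤ) - n)) (n+1)]
    apply Finset.sum_congr rfl
    intro j hj
    simp only [Finset.mem_range] at hj
    have hj' : j ≤ n := Nat.lt_succ_iff.mp hj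
    congr 1
    have : ((n + 1 - 1 - j : ℕ) : ℤ) = (n : ℤ) - j := by
      simp; omega
    rw [this]; ring
  rw [key n, hsum, mul_zero, zero_smul]
end

section
/- Let λ, μ ∈ ℂ. Define the operator F_λ on functions f : ℝ_{>0} → ℂ by (F_λ f)(x) = x²·f'(x) - λ·x·f(x) (derivative in the real-variable sense, values in ℂ), and let g_μ(x) = (x : ℂ)^μ (complex power of a positive real). Then for every natural number n, F_λ^n g_μ = (∏_{k=0}^{n-1} (μ - λ + k)) · g_{μ+n}. -/
/-- The operator `F_λ f (x) = x² f'(x) - λ x f(x)` on complex-valued functions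
of a real variable (derivative in the real-variable sense). -/
noncomputable def Flam (lam : ℂ) (f : ℝ → ℂ) : ℝ → ℂ :=
  fun x => ((x : ℂ)) ^ 2 * deriv f x - lam * (x : ℂ) * f x

lemma hd_cpow (c : ℂ) {x : ℝ} (hx : 0 < x) :
    HasDerivAt (fun y : ℝ => ((y : ℂ)) ^ c) (c * (x : ℂ) ^ (c - 1)) x := by
  have hm : (x : ℂ) ∈ Complex.slitPlane := Or.inl (by simpa using hx)
  have h := (Complex.hasStrictDerivAt_cpow_const (c := c) hm).hasDerivAt.comp_ofReal
  simpa using h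

lemma stmt_6_aux (lam mu : ℂ) (n : ℕ) : ∀ x : ℝ, 0 < x →
    (Flam lam)^[n] (fun y : ℝ => ((y : ℂ)) ^ mu) x
      = (∏ k ∈ Finset.range n, (mu - lam + (k : ℂ))) * ((x : ℂ)) ^ (mu + (n : ℂ)) := by
  induction n with
  | zero => intro x hx; simp
  | succ n ih =>
    intro x hx
    have hx0 : (x : ℂ) ≠ 0 := by
      simpa using ne_of_gt hx
    set c := ∏ k ∈ Finset.range n, (mu - lam + (k : ℂ)) with hc
    have hEq : (Flam lam)^[n] (fun y : ℝ => ((y : ℂ)) ^ mu)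
        =ᶠ[nhds x] fun y : ℝ => c * ((y : ℂ)) ^ (mu + (n : ℂ)) :=
      Filter.eventuallyEq_of_mem (Ioi_mem_nhds hx) (fun y hy => ih y hy)
    have hderiv : deriv ((Flam lam)^[n] (fun y : ℝ => ((y : ℂ)) ^ mu)) x
        = c * ((mu + n) * (x : ℂ) ^ (mu + (n : ℂ) - 1)) := by
      rw [hEq.deriv_eq]
      exact (((hd_cpow (mu + n) hx)).const_mul c).deriv
    rw [Function.iterate_succ_apply', Flam, hderiv, ih x hx, Finset.prod_range_succ]
    have e1 : ((x : ℂ)) ^ (mu + (n : ℂ)) = (x : ℂ) ^ (mu + (n : ℂ) - 1) * x := by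
      rw [show mu + (n : ℂ) = (mu + (n : ℂ) - 1) + 1 by ring,
        Complex.cpow_add _ _ hx0, Complex.cpow_one]
      ring_nf
    have e2 : ((x : ℂ)) ^ (mu + ((n : ℕ) + 1 : ℕ)) = (x : ℂ) ^ (mu + (n : ℂ) - 1) * x * x := by
      rw [show (mu + ((n : ℕ) + 1 : ℕ) : ℂ) = (mu + (n : ℂ) - 1) + 1 + 1 by push_cast; ring,
        Complex.cpow_add _ _ hx0, Complex.cpow_add _ _ hx0, Complex.cpow_one]
    rw [e1, e2]
    ring

/-- For `g_μ(x) = x^μ` (complex power of a positive real) one has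
`F_λ^n g_μ = (∏_{k=0}^{n-1} (μ - λ + k)) g_{μ+n}` on `ℝ_{>0}`. -/
theorem stmt_6 (lam mu : ℂ) (n : ℕ) (x : ℝ) (hx : 0 < x) :
    (Flam lam)^[n] (fun y : ℝ => ((y : ℂ)) ^ mu) x
      = (∏ k ∈ Finset.range n, (mu - lam + (k : ℂ))) * ((x : ℂ)) ^ (mu + (n : ℂ)) := by
  exact stmt_6_aux lam mu n x hx
end

section
/- Let λ, μ ∈ ℂ, let x > 0 be real and t ∈ ℂ with |t|·x < 1. With F_λ the operator (F_λ f)(x) = x²·f'(x) - λ·x·f(x) on functions ℝ_{>0} → ℂ and g_μ(x) = (x:ℂ)^μ, the series ∑_{n=0}^∞ ((-t)^n / n!) · (F_λ^n g_μ)(x) converges absolutely and equals x^μ · (1 + t·x)^{λ - μ}, where (1 + t·x)^{λ-μ} is the principal complex power (note Re(1 + tx) > 0). -/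
open Finset Filter Set


lemma flam_iter (lam mu : ℂ) : ∀ (n : ℕ) (s : ℝ), 0 < s →
    (Flam lam)^[n] (fun y : ℝ => ((y : ℂ)) ^ mu) s
      = (∏ k ∈ Finset.range n, (mu - lam + k)) * (s : ℂ) ^ (mu + n) := by
  intro n
  induction n with
  | zero => intro s hs; simp
  | succ n ih =>
    intro s hs
    have hz0 : (s : ℂ) ≠ 0 := by
      exact_mod_cast ne_of_gt (by exact_mod_cast hs : (0:ℝ) < s)
    set C : ℂ := ∏ k ∈ Finset.range n, (mu - lam + k) with hC
    have hev : (Flam lam)^[n] (fun y : ℝ => ((y : ℂ)) ^ mu)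
        =ᶠ[nhds s] fun y : ℝ => C * (y : ℂ) ^ (mu + n) := by
      filter_upwards [eventually_gt_nhds hs] with y hy
      exact ih y hy
    have hder : HasDerivAt (fun y : ℝ => (y : ℂ) ^ (mu + n))
        ((mu + n) * (s : ℂ) ^ (mu + n - 1)) s := by
      have h0 : (s : ℂ) ∈ Complex.slitPlane := by
        left; simpa using hs
      have := (Complex.hasStrictDerivAt_cpow_const (c := mu + n) h0).hasDerivAt
      exact this.comp_ofReal
    have hderiv : deriv ((Flam lam)^[n] (fun y : ℝ => ((y : ℂ)) ^ mu)) s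
        = C * ((mu + n) * (s : ℂ) ^ (mu + n - 1)) := by
      rw [hev.deriv_eq]
      exact ((hder.const_mul C).deriv)
    rw [Function.iterate_succ_apply']
    rw [show ∀ (f : ℝ → ℂ) (y : ℝ), Flam lam f y = (y:ℂ)^2 * deriv f y - lam * y * f y
      from fun _ _ => rfl]
    rw [hderiv, ih s hs, Finset.prod_range_succ]
    have key : ∀ w : ℂ, (s:ℂ) ^ (w + 1) = (s:ℂ) ^ w * s := fun w => by
      rw [Complex.cpow_add _ _ hz0, Complex.cpow_one]
    have e1 : (s:ℂ) ^ (mu + n) = (s:ℂ) ^ (mu + n - 1) * s := by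
      have h := key (mu + n - 1)
      rwa [sub_add_cancel] at h
    have e2 : (s:ℂ) ^ (mu + (n+1:ℕ)) = (s:ℂ) ^ (mu + n - 1) * s * s := by
      have h : mu + ((n+1:ℕ):ℂ) = (mu + n) + 1 := by push_cast; ring
      rw [h, key, e1]
    rw [e1, e2]
    ring


set_option maxHeartbeats 1000000 in
/-- For `x > 0` and `|t| x < 1`, the series `∑_{n≥0} ((-t)^n/n!) (F_λ^n g_μ)(x)`
(i.e. `exp(-t F_λ) g_μ` evaluated at `x`, where `g_μ(y) = y^μ`) converges
absolutely and equals `x^μ (1 + t x)^{λ - μ}` (principal complex power). -/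
theorem stmt_7 (lam mu : ℂ) (x : ℝ) (hx : 0 < x) (t : ℂ)
    (ht : ‖t‖ * x < 1) :
    Summable (fun n : ℕ =>
      ‖((-t) ^ n / (n.factorial : ℂ)) *
        ((Flam lam)^[n] (fun y : ℝ => ((y : ℂ)) ^ mu) x)‖) ∧
    ∑' n : ℕ, ((-t) ^ n / (n.factorial : ℂ)) *
        ((Flam lam)^[n] (fun y : ℝ => ((y : ℂ)) ^ mu) x)
      = ((x : ℂ)) ^ mu * (1 + t * (x : ℂ)) ^ (lam - mu) := by
  have ht' : ‖t‖ * x < 1 := by exact ht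
  have htn : (0:ℝ) ≤ ‖t‖ := norm_nonneg t
  obtain ⟨ρ, hxρ, hρpos, hρ1⟩ : ∃ ρ : ℝ, x < ρ ∧ 0 < ρ ∧ ‖t‖ * ρ < 1 := by
    refine ⟨x + (1 - ‖t‖*x)/(2*(‖t‖+1)), ?_, ?_, ?_⟩
    · have : 0 < (1 - ‖t‖*x)/(2*(‖t‖+1)) := div_pos (by linarith) (by linarith)
      linarith
    · have : 0 < (1 - ‖t‖*x)/(2*(‖t‖+1)) := div_pos (by linarith) (by linarith)
      linarith
    · have hden : (0:ℝ) < 2*(‖t‖+1) := by linarith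
      have hD : (1 - ‖t‖*x)/(2*(‖t‖+1)) * (2*(‖t‖+1)) = 1 - ‖t‖*x :=
        div_mul_cancel₀ _ (ne_of_gt hden)
      have hDnn : (0:ℝ) ≤ (1 - ‖t‖*x)/(2*(‖t‖+1)) := div_nonneg (by linarith) hden.le
      rw [mul_add]
      nlinarith [hD, hDnn, htn, ht']
  obtain ⟨q, hqlt, hq1⟩ : ∃ q : ℝ, ‖t‖*ρ < q ∧ q < 1 :=
    ⟨(1 + ‖t‖*ρ)/2, by linarith, by linarith⟩
  have hqpos : (0:ℝ) ≤ q := le_of_lt (lt_of_le_of_lt (mul_nonneg htn hρpos.le) hqlt)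
  set a : ℕ → ℂ := fun n => (∏ k ∈ Finset.range n, (mu - lam + k)) * (-t)^n / n.factorial
    with hadef
  have hrec : ∀ n : ℕ, a (n+1) * (n+1) = a n * ((mu - lam + n) * (-t)) := by
    intro n
    have hf : ((n.factorial : ℂ)) ≠ 0 := by exact_mod_cast n.factorial_ne_zero
    have hf1 : (((n+1).factorial : ℂ)) ≠ 0 := by exact_mod_cast (n+1).factorial_ne_zero
    rw [hadef]
    simp only [Finset.prod_range_succ, pow_succ, Nat.factorial_succ]
    have hn1 : ((n:ℂ)+1) ≠ 0 := by
      norm_cast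
    push_cast
    field_simp
  have hnrec : ∀ n : ℕ, ‖a (n+1)‖ * (n+1) = ‖a n‖ * (‖mu - lam + n‖ * ‖t‖) := by
    intro n
    have h := congrArg norm (hrec n)
    have e : ((n:ℂ)+1) = (((n+1:ℕ)):ℂ) := by push_cast; ring
    rw [e] at h
    rw [norm_mul, norm_mul, norm_mul, norm_neg, Complex.norm_natCast] at h
    push_cast at h
    exact h
  -- the key eventual bound
  have E : ∀ᶠ n : ℕ in atTop, ‖mu - lam + (n:ℂ)‖ * (‖t‖*ρ) ≤ q * n := by
    have hlim : Tendsto (fun n : ℕ => (n:ℝ) * (q - ‖t‖*ρ)) atTop atTop :=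
      tendsto_natCast_atTop_atTop.atTop_mul_const (by linarith)
    filter_upwards [hlim.eventually_ge_atTop (‖mu - lam‖ * (‖t‖*ρ))] with n hn
    have hb : ‖mu - lam + (n:ℂ)‖ ≤ ‖mu - lam‖ + n := by
      calc ‖mu - lam + (n:ℂ)‖ ≤ ‖mu - lam‖ + ‖(n:ℂ)‖ := norm_add_le _ _
        _ = ‖mu - lam‖ + n := by simp
    nlinarith [norm_nonneg (mu - lam + (n:ℂ)), mul_nonneg htn hρpos.le]
  -- summability of values
  have S1 : ∀ y : ℝ, |y| ≤ ρ → Summable (fun n : ℕ => ‖a n‖ * |y|^n) := by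
    intro y hy
    apply summable_of_ratio_norm_eventually_le hq1
    filter_upwards [E] with n hn
    have h0 : (0:ℝ) ≤ ‖a n‖ * |y|^n := by positivity
    have h1 : (0:ℝ) ≤ ‖a (n+1)‖ * |y|^(n+1) := by positivity
    rw [Real.norm_of_nonneg h1, Real.norm_of_nonneg h0]
    have hstep : ‖a (n+1)‖ * ρ ≤ q * ‖a n‖ := by
      have hn1 : (0:ℝ) < (n:ℝ) + 1 := by positivity
      rw [← mul_le_mul_iff_of_pos_right hn1]
      calc ‖a (n+1)‖ * ρ * ((n:ℝ)+1) = (‖a (n+1)‖ * ((n:ℝ)+1)) * ρ := by ring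
        _ = ‖a n‖ * (‖mu - lam + n‖ * ‖t‖) * ρ := by rw [hnrec n]
        _ = ‖a n‖ * (‖mu - lam + n‖ * (‖t‖ * ρ)) := by ring
        _ ≤ ‖a n‖ * (q * n) := by
            apply mul_le_mul_of_nonneg_left _ (norm_nonneg _)
            exact hn
        _ ≤ q * ‖a n‖ * ((n:ℝ)+1) := by
            nlinarith [norm_nonneg (a n)]
    calc ‖a (n+1)‖ * |y|^(n+1) = (‖a (n+1)‖ * |y|) * |y|^n := by ring
      _ ≤ (‖a (n+1)‖ * ρ) * |y|^n := by
          apply mul_le_mul_of_nonneg_right _ (by positivity)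
          exact mul_le_mul_of_nonneg_left hy (norm_nonneg _)
      _ ≤ (q * ‖a n‖) * |y|^n := mul_le_mul_of_nonneg_right hstep (by positivity)
      _ = q * (‖a n‖ * |y|^n) := by ring
  -- summability of derivative bounds
  have S2 : Summable (fun n : ℕ => (n:ℝ) * ‖a n‖ * ρ^(n-1)) := by
    apply summable_of_ratio_norm_eventually_le hq1
    filter_upwards [E, eventually_ge_atTop 1] with n hn hn1
    have h0 : (0:ℝ) ≤ (n:ℝ) * ‖a n‖ * ρ^(n-1) := by positivity
    have h1 : (0:ℝ) ≤ ((n+1:ℕ):ℝ) * ‖a (n+1)‖ * ρ^(n+1-1) := by positivity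
    rw [Real.norm_of_nonneg h1, Real.norm_of_nonneg h0]
    have hpow : ρ^(n+1-1) = ρ^(n-1) * ρ := by
      rw [Nat.add_sub_cancel, ← pow_succ, Nat.sub_add_cancel hn1]
    rw [hpow]
    have e0 : ((n+1:ℕ):ℝ) * ‖a (n+1)‖ = ‖a n‖ * (‖mu - lam + n‖ * ‖t‖) := by
      push_cast
      rw [mul_comm]
      exact hnrec n
    calc ((n+1:ℕ):ℝ) * ‖a (n+1)‖ * (ρ^(n-1) * ρ)
        = (‖a n‖ * ρ^(n-1)) * (‖mu - lam + n‖ * (‖t‖ * ρ)) := by rw [e0]; ring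
      _ ≤ (‖a n‖ * ρ^(n-1)) * (q * n) := by
          apply mul_le_mul_of_nonneg_left hn (by positivity)
      _ = q * ((n:ℝ) * ‖a n‖ * ρ^(n-1)) := by ring
  set g : ℕ → ℝ → ℂ := fun n y => a n * (y:ℂ)^n with hgdef
  set g' : ℕ → ℝ → ℂ := fun n y => a n * (n * (y:ℂ)^(n-1)) with hg'def
  have hg : ∀ (n : ℕ) (y : ℝ), HasDerivAt (g n) (g' n y) y := by
    intro n y
    exact (((hasDerivAt_pow n ((y:ℝ):ℂ)).const_mul (a n)).comp_ofReal)
  have hnormg' : ∀ (n : ℕ) (y : ℝ), ‖g' n y‖ = (n:ℝ) * ‖a n‖ * |y|^(n-1) := by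
    intro n y
    simp [hg'def, norm_mul, Complex.norm_real, abs_of_nonneg, Real.norm_eq_abs]
    ring
  have hgb : ∀ (n : ℕ), ∀ y ∈ Ioo (-ρ) ρ, ‖g' n y‖ ≤ (n:ℝ) * ‖a n‖ * ρ^(n-1) := by
    intro n y hy
    rw [hnormg' n y]
    have hyρ : |y| ≤ ρ := (abs_lt.2 ⟨hy.1, hy.2⟩).le
    exact mul_le_mul_of_nonneg_left (pow_le_pow_left₀ (abs_nonneg y) hyρ _) (by positivity)
  have hsum0 : Summable (fun n : ℕ => g n 0) := by
    apply summable_of_ne_finset_zero (s := {0})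
    intro n hn
    simp only [Finset.mem_singleton] at hn
    simp [hgdef, zero_pow hn]
  have h0mem : (0:ℝ) ∈ Ioo (-ρ) ρ := ⟨by linarith, hρpos⟩
  have hU : ∀ y ∈ Ioo (-ρ) ρ, HasDerivAt (fun z => ∑' n, g n z) (∑' n, g' n y) y := by
    intro y hy
    exact hasDerivAt_tsum_of_isPreconnected S2 isOpen_Ioo isPreconnected_Ioo
      (fun n z _ => hg n z) (fun n z hz => hgb n z hz) h0mem hsum0 hy
  have hsum' : ∀ y ∈ Ioo (-ρ) ρ, Summable (fun n => g' n y) := by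
    intro y hy
    exact Summable.of_norm_bounded S2 (fun n => hgb n y hy)
  -- the ODE
  have hODE : ∀ y ∈ Ioo (-ρ) ρ,
      (1 + t*(y:ℂ)) * (∑' n, g' n y) = t*(lam - mu) * (∑' n, g n y) := by
    intro y hy
    have hs' := hsum' y hy
    have hshift : Summable (fun n => g' (n+1) y) := (summable_nat_add_iff 1).2 hs'
    have hD : ∑' n, g' n y = ∑' n, g' (n+1) y := by
      rw [Summable.tsum_eq_zero_add hs']
      simp [hg'def]
    have hgy : Summable (fun n => g n y) := by
      have hyρ : |y| ≤ ρ := (abs_lt.2 ⟨hy.1, hy.2⟩).le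
      apply Summable.of_norm
      apply (S1 y hyρ).congr
      intro n
      simp [hgdef, norm_mul, Complex.norm_real, Real.norm_eq_abs]
    have hterm : ∀ n : ℕ, g' (n+1) y + (t*(y:ℂ)) * g' n y = t*(lam - mu) * g n y := by
      intro n
      cases n with
      | zero =>
        have h := hrec 0
        simp only [hg'def, hgdef]
        push_cast
        simp only [pow_zero, pow_one]
        push_cast at h
        simp at h ⊢
        linear_combination h
      | succ m =>
        have h := hrec (m+1)
        simp only [hg'def, hgdef]
        push_cast
        push_cast at h
        linear_combination ((y:ℂ))^(m+1) * h
    calc (1 + t*(y:ℂ)) * (∑' n, g' n y)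
        = (∑' n, g' n y) + (t*(y:ℂ)) * (∑' n, g' n y) := by ring
      _ = (∑' n, g' (n+1) y) + (∑' n, (t*(y:ℂ)) * g' n y) := by
          rw [← hD, tsum_mul_left]
      _ = ∑' n, (g' (n+1) y + (t*(y:ℂ)) * g' n y) := (Summable.tsum_add hshift (hs'.mul_left _)).symm
      _ = ∑' n, t*(lam - mu) * g n y := by exact tsum_congr hterm
      _ = t*(lam - mu) * (∑' n, g n y) := tsum_mul_left
  -- slit plane membership
  have hslit : ∀ y ∈ Ioo (-ρ) ρ, (1 + t*(y:ℂ)) ∈ Complex.slitPlane := by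
    intro y hy
    left
    have hre : (1 + t*(y:ℂ)).re = 1 + t.re * y := by simp
    rw [hre]
    have h1 : |t.re| ≤ ‖t‖ := Complex.abs_re_le_norm t
    have h2 : |y| < ρ := abs_lt.2 ⟨hy.1, hy.2⟩
    have h3 : |t.re * y| ≤ ‖t‖ * ρ := by
      rw [abs_mul]
      exact mul_le_mul h1 h2.le (abs_nonneg y) htn
    have := neg_abs_le (t.re * y)
    linarith
  have hw : ∀ y ∈ Ioo (-ρ) ρ,
      HasDerivAt (fun z : ℝ => (∑' n, g n z) * (1 + t*(z:ℂ))^(mu - lam)) 0 y := by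
    intro y hy
    have hne : (1 + t*(y:ℂ)) ≠ 0 := Complex.slitPlane_ne_zero (hslit y hy)
    have hinner : HasDerivAt (fun z : ℂ => 1 + t*z) t (y:ℂ) := by
      simpa using ((hasDerivAt_id ((y:ℝ):ℂ)).const_mul t).const_add 1
    have h2der : HasDerivAt (fun z : ℝ => (1 + t*(z:ℂ))^(mu - lam))
        ((mu - lam) * (1 + t*(y:ℂ))^(mu - lam - 1) * t) y := by
      have := (hinner.cpow_const (c := mu - lam) (hslit y hy)).comp_ofReal
      simpa using this
    have hmul := (hU y hy).mul h2der
    have e : (1 + t*(y:ℂ))^(mu - lam) = (1 + t*(y:ℂ))^(mu - lam - 1) * (1 + t*(y:ℂ)) := by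
      have h := Complex.cpow_add (mu - lam - 1) 1 hne
      rw [sub_add_cancel, Complex.cpow_one] at h
      exact h
    have hODEy := hODE y hy
    have : (∑' n, g' n y) * (1 + t*(y:ℂ))^(mu - lam)
        + (∑' n, g n y) * ((mu - lam) * (1 + t*(y:ℂ))^(mu - lam - 1) * t) = 0 := by
      linear_combination (∑' n, g' n y) * e + (1 + t*(y:ℂ))^(mu - lam - 1) * hODEy
    exact hmul.congr_deriv this
  -- constancy on [0, x]
  have hsub : Icc (0:ℝ) x ⊆ Ioo (-ρ) ρ := fun y hy =>
    ⟨by linarith [hy.1], by linarith [hy.2]⟩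
  have hconst := constant_of_has_deriv_right_zero
    (f := fun z : ℝ => (∑' n, g n z) * (1 + t*(z:ℂ))^(mu - lam)) (a := 0) (b := x)
    (fun y hy => (hw y (hsub hy)).continuousAt.continuousWithinAt)
    (fun y hy => (hw y (hsub (Ico_subset_Icc_self hy))).hasDerivWithinAt)
  have hwx := hconst x (right_mem_Icc.2 hx.le)
  beta_reduce at hwx
  have hU0 : (∑' n, g n 0) = 1 := by
    rw [tsum_eq_single 0 (fun n hn => by simp [hgdef, zero_pow hn])]
    simp [hgdef, hadef]
  have hw0 : (∑' n, g n 0) * (1 + t*((0:ℝ):ℂ))^(mu - lam) = 1 := by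
    rw [hU0]
    norm_num
  rw [hw0] at hwx
  have hxmem : x ∈ Ioo (-ρ) ρ := hsub (right_mem_Icc.2 hx.le)
  have hnex : (1 + t*(x:ℂ)) ≠ 0 := Complex.slitPlane_ne_zero (hslit x hxmem)
  have hprod : (1 + t*(x:ℂ))^(mu - lam) * (1 + t*(x:ℂ))^(lam - mu) = 1 := by
    rw [← Complex.cpow_add _ _ hnex]
    norm_num
  have hUx : (∑' n, g n x) = (1 + t*(x:ℂ))^(lam - mu) := by
    linear_combination (1 + t*(x:ℂ))^(lam - mu) * hwx - (∑' n, g n x) * hprod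
  -- term identity
  have hx0 : ((x:ℝ):ℂ) ≠ 0 := by
    exact_mod_cast ne_of_gt (by exact_mod_cast hx : (0:ℝ) < x)
  have hterm : ∀ n : ℕ, ((-t) ^ n / (n.factorial : ℂ)) *
      ((Flam lam)^[n] (fun y : ℝ => ((y : ℂ)) ^ mu) x) = (x:ℂ)^mu * g n x := by
    intro n
    rw [flam_iter lam mu n x hx]
    have hsplit : ((x:ℝ):ℂ) ^ (mu + (n:ℂ)) = (x:ℂ)^mu * ((x:ℂ))^(n:ℕ) := by
      rw [Complex.cpow_add _ _ hx0, Complex.cpow_natCast]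
    rw [hsplit]
    simp only [hgdef, hadef]
    ring
  have hxle : |x| ≤ ρ := by rw [abs_of_pos hx]; exact hxρ.le
  constructor
  · apply ((S1 x hxle).mul_left ‖(x:ℂ)^mu‖).congr
    intro n
    rw [hterm n, norm_mul]
    congr 1
    simp [hgdef, norm_mul, Complex.norm_real, Real.norm_eq_abs]
  · calc ∑' n : ℕ, ((-t) ^ n / (n.factorial : ℂ)) *
        ((Flam lam)^[n] (fun y : ℝ => ((y : ℂ)) ^ mu) x)
        = ∑' n : ℕ, (x:ℂ)^mu * g n x := tsum_congr hterm
      _ = (x:ℂ)^mu * ∑' n, g n x := tsum_mul_left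
      _ = (x:ℂ)^mu * (1 + t * (x:ℂ))^(lam - mu) := by rw [hUx]
end

section
/- Fix real 0 < q < 1, λ ∈ ℂ, z ∈ ℂ with z ≠ 0; write q^w := exp(w·log q), [n]_q := (1-q^{2n})/(1-q²), [n]_q! := ∏_{k=1}^n [k]_q. Define the operator F₀ on functions ℝ_{>0} → ℂ by (F₀ f)(x) = -z^{-1}·x·(q^{-2λ+1} f(q²x) - q^{2λ+1} f(x))/(q² - 1), and p_α(x) = (x:ℂ)^α. Then for x > 0, α ∈ ℂ and t ∈ ℂ with |q^{2λ+1}|·|t|·x/|z| < 1, the series ∑_{n=0}^∞ ((-t)^n/[n]_q!)·(F₀^n p_α)(x) converges absolutely and equals x^α · ∏_{j=0}^∞ (1 - q^{-2λ+2α+1+2j}·t·x/z) / (1 - q^{2λ+1+2j}·t·x/z). -/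
/-- `q^z := exp(z log q)` for a real base `q` and complex exponent `z`. -/
noncomputable def qpow (q : ℝ) (z : ℂ) : ℂ := Complex.exp (z * (Real.log q : ℂ))

/-- The q-number `[n]_q = (1 - q^{2n})/(1 - q²)` as a complex number. -/
noncomputable def qnum (q : ℝ) (n : ℕ) : ℂ :=
  (1 - (q : ℂ) ^ (2 * n)) / (1 - (q : ℂ) ^ 2)

/-- The q-factorial `[n]_q! = ∏_{k=1}^n [k]_q`. -/
noncomputable def qfact (q : ℝ) (n : ℕ) : ℂ := ∏ k ∈ Finset.Icc 1 n, qnum q k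

/-- Positive reals. -/
abbrev PosR : Type := {x : ℝ // 0 < x}

/-- `x ↦ q² x` on positive reals. -/
noncomputable def scaleUp (q : ℝ) (hq : 0 < q) (x : PosR) : PosR :=
  ⟨q ^ 2 * x.1, mul_pos (pow_pos hq 2) x.2⟩

/-- The affine generator
`(F₀ f)(x) = -z⁻¹ x (q^{-2λ+1} f(q²x) - q^{2λ+1} f(x))/(q² - 1)`. -/
noncomputable def F0op (q : ℝ) (hq : 0 < q) (lam z : ℂ) (f : PosR → ℂ) :
    PosR → ℂ :=
  fun x => -z⁻¹ * ((x.1 : ℂ) *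
    (qpow q (-2 * lam + 1) * f (scaleUp q hq x) - qpow q (2 * lam + 1) * f x) /
      ((q : ℂ) ^ 2 - 1))

open Filter Finset Topology

namespace QB

/-- Coefficients of the q-binomial series. -/
noncomputable def c (p a : ℂ) (n : ℕ) : ℂ :=
  ∏ k ∈ Finset.range n, (1 - a * p ^ k) / (1 - p ^ (k + 1))

lemma c_zero (p a : ℂ) : c p a 0 = 1 := by simp [c]

lemma c_succ (p a : ℂ) (n : ℕ) :
    c p a (n + 1) = c p a n * ((1 - a * p ^ n) / (1 - p ^ (n + 1))) := by
  simp [c, Finset.prod_range_succ, mul_div_mul_comm]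

lemma one_sub_ne_zero {u : ℂ} (h : ‖u‖ < 1) : (1 : ℂ) - u ≠ 0 := by
  intro h0
  have : u = 1 := by linear_combination -h0
  rw [this] at h; simp at h

variable {p w : ℂ} (a : ℂ)

lemma norm_pow_le_one (hp : ‖p‖ < 1) (n : ℕ) : ‖p ^ n‖ ≤ 1 := by
  rw [norm_pow]
  exact pow_le_one₀ (norm_nonneg p) hp.le

lemma norm_pow_succ_lt_one (hp : ‖p‖ < 1) (n : ℕ) : ‖p ^ (n + 1)‖ < 1 := by
  rw [norm_pow]
  exact pow_lt_one₀ (norm_nonneg p) hp (Nat.succ_ne_zero n)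

lemma c_rec (hp : ‖p‖ < 1) (n : ℕ) : c p a (n + 1) * (1 - p ^ (n + 1)) = c p a n * (1 - a * p ^ n) := by
  rw [c_succ, mul_assoc, div_mul_cancel₀]
  exact one_sub_ne_zero (norm_pow_succ_lt_one hp n)

lemma summable_shift (hp : ‖p‖ < 1) (hw : ‖w‖ < 1) : Summable (fun n : ℕ => ‖c p a (n + 1)‖ * ‖w‖ ^ n) := by
  set r : ℝ := (1 + ‖w‖) / 2 with hr
  have hr1 : r < 1 := by rw [hr]; linarith
  apply summable_of_ratio_norm_eventually_le hr1
  have hρ : Tendsto (fun n : ℕ =>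
      (1 + ‖a‖ * ‖p‖ ^ (n + 1)) / (1 - ‖p‖ ^ (n + 2)) * ‖w‖) atTop (𝓝 ‖w‖) := by
    have hpt : Tendsto (fun n : ℕ => ‖p‖ ^ n) atTop (𝓝 0) :=
      tendsto_pow_atTop_nhds_zero_of_lt_one (norm_nonneg p) hp
    have h1 : Tendsto (fun n : ℕ => 1 + ‖a‖ * ‖p‖ ^ (n + 1)) atTop (𝓝 1) := by
      have := ((hpt.comp (tendsto_add_atTop_nat 1)).const_mul ‖a‖).const_add 1
      simpa using this
    have h2 : Tendsto (fun n : ℕ => 1 - ‖p‖ ^ (n + 2)) atTop (𝓝 1) := by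
      have := ((hpt.comp (tendsto_add_atTop_nat 2)).const_mul (1:ℝ)).const_add 0
      have h' : Tendsto (fun n : ℕ => ‖p‖ ^ (n + 2)) atTop (𝓝 0) :=
        hpt.comp (tendsto_add_atTop_nat 2)
      simpa using (tendsto_const_nhds.sub h')
    have := (h1.div h2 one_ne_zero).mul_const ‖w‖
    simpa using this
  have hev : ∀ᶠ n : ℕ in atTop,
      (1 + ‖a‖ * ‖p‖ ^ (n + 1)) / (1 - ‖p‖ ^ (n + 2)) * ‖w‖ ≤ r := by
    have : ‖w‖ < r := by rw [hr]; linarith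
    exact hρ.eventually_le_const this
  filter_upwards [hev] with n hn
  have hden : (0:ℝ) < 1 - ‖p‖ ^ (n + 2) := by
    have : ‖p‖ ^ (n + 2) < 1 := pow_lt_one₀ (norm_nonneg p) hp (Nat.succ_ne_zero _)
    linarith
  have hcb : ‖c p a (n + 2)‖ ≤ ‖c p a (n + 1)‖ * ((1 + ‖a‖ * ‖p‖ ^ (n + 1)) / (1 - ‖p‖ ^ (n + 2))) := by
    rw [c_succ, norm_mul]
    apply mul_le_mul_of_nonneg_left _ (norm_nonneg _)
    rw [norm_div]
    apply div_le_div₀ (by positivity) _ hden _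
    · calc ‖1 - a * p ^ (n + 1)‖ ≤ ‖(1:ℂ)‖ + ‖a * p ^ (n + 1)‖ := norm_sub_le _ _
        _ = 1 + ‖a‖ * ‖p‖ ^ (n + 1) := by simp [norm_mul, norm_pow]
    · calc 1 - ‖p‖ ^ (n + 2) = 1 - ‖p ^ (n + 2)‖ := by rw [norm_pow]
        _ ≤ ‖1 - p ^ (n + 2)‖ := by
            have := norm_sub_norm_le (1:ℂ) (p ^ (n+2))
            simpa using this
  have h0 : (0:ℝ) ≤ ‖w‖ ^ n := by positivity
  calc ‖‖c p a (n + 1 + 1)‖ * ‖w‖ ^ (n + 1)‖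
      = ‖c p a (n + 2)‖ * (‖w‖ ^ n * ‖w‖) := by
        rw [Real.norm_of_nonneg (by positivity)]; ring
    _ ≤ (‖c p a (n + 1)‖ * ((1 + ‖a‖ * ‖p‖ ^ (n + 1)) / (1 - ‖p‖ ^ (n + 2)))) * (‖w‖ ^ n * ‖w‖) := by
        apply mul_le_mul_of_nonneg_right hcb (by positivity)
    _ = ((1 + ‖a‖ * ‖p‖ ^ (n + 1)) / (1 - ‖p‖ ^ (n + 2)) * ‖w‖) * (‖c p a (n + 1)‖ * ‖w‖ ^ n) := by
        ring
    _ ≤ r * (‖c p a (n + 1)‖ * ‖w‖ ^ n) := by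
        apply mul_le_mul_of_nonneg_right hn (by positivity)
    _ = r * ‖‖c p a (n + 1)‖ * ‖w‖ ^ n‖ := by
        rw [Real.norm_of_nonneg (by positivity)]

lemma summable_norm_full (hp : ‖p‖ < 1) (hw : ‖w‖ < 1) : Summable (fun n : ℕ => ‖c p a n‖ * ‖w‖ ^ n) := by
  rw [← summable_nat_add_iff 1]
  refine Summable.of_nonneg_of_le (fun n => by positivity) (fun n => ?_)
    (summable_shift a hp hw)
  have : ‖w‖ ^ (n + 1) ≤ ‖w‖ ^ n := by
    apply pow_le_pow_of_le_one (norm_nonneg w) hw.le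
    omega
  exact mul_le_mul_of_nonneg_left this (norm_nonneg _)

lemma summable_at (hp : ‖p‖ < 1) (hw : ‖w‖ < 1) {u : ℂ} (hu : ‖u‖ ≤ ‖w‖) : Summable (fun n : ℕ => c p a n * u ^ n) := by
  apply Summable.of_norm
  apply Summable.of_nonneg_of_le (fun n => norm_nonneg _) _ (summable_norm_full a hp hw)
  intro n
  rw [norm_mul, norm_pow]
  exact mul_le_mul_of_nonneg_left (pow_le_pow_left₀ (norm_nonneg u) hu n) (norm_nonneg _)

/-- The q-binomial series. -/
noncomputable def f (p a u : ℂ) : ℂ := ∑' n : ℕ, c p a n * u ^ n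

set_option maxHeartbeats 2000000 in
lemma feq (hp : ‖p‖ < 1) (hw : ‖w‖ < 1) {u : ℂ} (hu : ‖u‖ ≤ ‖w‖) :
    (1 - u) * f p a u = (1 - a * u) * f p a (p * u) := by
  have hpu : ‖p * u‖ ≤ ‖w‖ := by
    rw [norm_mul]
    calc ‖p‖ * ‖u‖ ≤ 1 * ‖w‖ := by
          apply mul_le_mul hp.le hu (norm_nonneg u) zero_le_one
      _ = ‖w‖ := one_mul _
  have Su : Summable (fun n : ℕ => c p a n * u ^ n) := summable_at a hp hw hu
  have Spu : Summable (fun n : ℕ => c p a n * (p * u) ^ n) := summable_at a hp hw hpu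
  have Su1 : Summable (fun n : ℕ => c p a (n + 1) * u ^ (n + 1)) :=
    (summable_nat_add_iff 1).2 Su
  have Spu1 : Summable (fun n : ℕ => c p a (n + 1) * (p * u) ^ (n + 1)) :=
    (summable_nat_add_iff 1).2 Spu
  have hL : (1 - u) * f p a u
      = 1 + ∑' n : ℕ, (c p a (n + 1) * u ^ (n + 1) - c p a n * u ^ (n + 1)) := by
    have h1 : f p a u = 1 + ∑' n : ℕ, c p a (n + 1) * u ^ (n + 1) := by
      rw [f, Su.tsum_eq_zero_add]
      simp [c_zero]
    have h2 : u * f p a u = ∑' n : ℕ, c p a n * u ^ (n + 1) := by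
      rw [f, ← tsum_mul_left]
      exact tsum_congr fun n => by ring
    have h3 : ∑' n : ℕ, (c p a (n + 1) * u ^ (n + 1) - c p a n * u ^ (n + 1))
        = (∑' n : ℕ, c p a (n + 1) * u ^ (n + 1)) - ∑' n : ℕ, c p a n * u ^ (n + 1) := by
      have Su' : Summable (fun n : ℕ => c p a n * u ^ (n + 1)) := by
        have : (fun n : ℕ => c p a n * u ^ (n + 1)) = fun n : ℕ => u * (c p a n * u ^ n) := by
          funext n; ring
        rw [this]; exact Su.mul_left u
      exact Su1.tsum_sub Su'
    rw [h3, sub_mul, one_mul, h2, h1]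
    ring
  have hR : (1 - a * u) * f p a (p * u)
      = 1 + ∑' n : ℕ, (c p a (n + 1) * u ^ (n + 1) - c p a n * u ^ (n + 1)) := by
    have h1 : f p a (p * u) = 1 + ∑' n : ℕ, c p a (n + 1) * (p * u) ^ (n + 1) := by
      rw [f, Spu.tsum_eq_zero_add]
      simp [c_zero]
    have h2 : (a * u) * f p a (p * u) = ∑' n : ℕ, a * c p a n * p ^ n * u ^ (n + 1) := by
      rw [f, ← tsum_mul_left]
      exact tsum_congr fun n => by ring
    have h3 : ∑' n : ℕ, (c p a (n + 1) * u ^ (n + 1) - c p a n * u ^ (n + 1))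
        = (∑' n : ℕ, c p a (n + 1) * (p * u) ^ (n + 1))
          - ∑' n : ℕ, a * c p a n * p ^ n * u ^ (n + 1) := by
      have Su'' : Summable (fun n : ℕ => a * c p a n * p ^ n * u ^ (n + 1)) := by
        have : (fun n : ℕ => a * c p a n * p ^ n * u ^ (n + 1))
            = fun n : ℕ => (a * u) * (c p a n * (p * u) ^ n) := by
          funext n; rw [mul_pow]; ring
        rw [this]; exact Spu.mul_left (a * u)
      rw [← Spu1.tsum_sub Su'']
      · apply tsum_congr
        intro n
        have hrec := c_rec a hp n
        have : c p a (n + 1) - c p a n = c p a (n + 1) * p ^ (n + 1) - a * c p a n * p ^ n := by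
          linear_combination hrec
        calc c p a (n + 1) * u ^ (n + 1) - c p a n * u ^ (n + 1)
            = (c p a (n + 1) - c p a n) * u ^ (n + 1) := by ring
          _ = (c p a (n + 1) * p ^ (n + 1) - a * c p a n * p ^ n) * u ^ (n + 1) := by rw [this]
          _ = c p a (n + 1) * (p * u) ^ (n + 1) - a * c p a n * p ^ n * u ^ (n + 1) := by
              rw [mul_pow]; ring
    rw [sub_mul, one_mul, h2, h1, h3]
    ring
  rw [hL, hR]

lemma step (hp : ‖p‖ < 1) (hw : ‖w‖ < 1) {u : ℂ} (hu : ‖u‖ ≤ ‖w‖) :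
    f p a u = (1 - a * u) / (1 - u) * f p a (p * u) := by
  have h1u : (1 : ℂ) - u ≠ 0 := one_sub_ne_zero (lt_of_le_of_lt hu hw)
  rw [div_mul_eq_mul_div, eq_div_iff h1u]
  linear_combination feq a hp hw hu

lemma iter (hp : ‖p‖ < 1) (hw : ‖w‖ < 1) (N : ℕ) :
    f p a w = (∏ j ∈ Finset.range N, (1 - a * w * p ^ j) / (1 - w * p ^ j))
      * f p a (p ^ N * w) := by
  induction N with
  | zero => simp
  | succ N ih =>
    have hu : ‖p ^ N * w‖ ≤ ‖w‖ := by
      rw [norm_mul]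
      calc ‖p ^ N‖ * ‖w‖ ≤ 1 * ‖w‖ :=
            mul_le_mul_of_nonneg_right (norm_pow_le_one hp N) (norm_nonneg w)
        _ = ‖w‖ := one_mul _
    rw [ih, step a hp hw hu, Finset.prod_range_succ]
    rw [show p * (p ^ N * w) = p ^ (N + 1) * w by ring]
    rw [show a * (p ^ N * w) = a * w * p ^ N by ring]
    rw [show w * p ^ N = p ^ N * w by ring]
    ring

lemma tail (hp : ‖p‖ < 1) (hw : ‖w‖ < 1) {u : ℂ} (hu : ‖u‖ ≤ ‖w‖) :
    ‖f p a u - 1‖ ≤ ‖u‖ * ∑' n : ℕ, ‖c p a (n + 1)‖ * ‖w‖ ^ n := by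
  have Su : Summable (fun n : ℕ => c p a n * u ^ n) := summable_at a hp hw hu
  have h1 : f p a u - 1 = ∑' n : ℕ, c p a (n + 1) * u ^ (n + 1) := by
    rw [f, Su.tsum_eq_zero_add]
    simp [c_zero]
  rw [h1]
  have hnorm : Summable (fun n : ℕ => ‖c p a (n + 1) * u ^ (n + 1)‖) := by
    refine Summable.of_nonneg_of_le (fun n => norm_nonneg _) (fun n => ?_)
      ((summable_shift a hp hw).mul_left ‖u‖)
    rw [norm_mul, norm_pow, pow_succ]
    calc ‖c p a (n + 1)‖ * (‖u‖ ^ n * ‖u‖)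
        ≤ ‖c p a (n + 1)‖ * (‖w‖ ^ n * ‖u‖) := by
          apply mul_le_mul_of_nonneg_left _ (norm_nonneg _)
          exact mul_le_mul_of_nonneg_right (pow_le_pow_left₀ (norm_nonneg u) hu n) (norm_nonneg u)
      _ = ‖u‖ * (‖c p a (n + 1)‖ * ‖w‖ ^ n) := by ring
  calc ‖∑' n : ℕ, c p a (n + 1) * u ^ (n + 1)‖
      ≤ ∑' n : ℕ, ‖c p a (n + 1) * u ^ (n + 1)‖ := norm_tsum_le_tsum_norm hnorm
    _ ≤ ∑' n : ℕ, ‖u‖ * (‖c p a (n + 1)‖ * ‖w‖ ^ n) := by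
        apply Summable.tsum_le_tsum _ hnorm ((summable_shift a hp hw).mul_left ‖u‖)
        intro n
        rw [norm_mul, norm_pow, pow_succ]
        calc ‖c p a (n + 1)‖ * (‖u‖ ^ n * ‖u‖)
            ≤ ‖c p a (n + 1)‖ * (‖w‖ ^ n * ‖u‖) := by
              apply mul_le_mul_of_nonneg_left _ (norm_nonneg _)
              exact mul_le_mul_of_nonneg_right
                (pow_le_pow_left₀ (norm_nonneg u) hu n) (norm_nonneg u)
          _ = ‖u‖ * (‖c p a (n + 1)‖ * ‖w‖ ^ n) := by ring
    _ = ‖u‖ * ∑' n : ℕ, ‖c p a (n + 1)‖ * ‖w‖ ^ n := tsum_mul_left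

lemma tendsto_tail (hp : ‖p‖ < 1) (hw : ‖w‖ < 1) :
    Tendsto (fun N : ℕ => f p a (p ^ N * w)) atTop (𝓝 1) := by
  rw [tendsto_iff_norm_sub_tendsto_zero]
  set M : ℝ := ∑' n : ℕ, ‖c p a (n + 1)‖ * ‖w‖ ^ n with hM
  apply squeeze_zero (fun N => norm_nonneg _) (g := fun N : ℕ => ‖p‖ ^ N * ‖w‖ * M)
  · intro N
    have hu : ‖p ^ N * w‖ ≤ ‖w‖ := by
      rw [norm_mul]
      calc ‖p ^ N‖ * ‖w‖ ≤ 1 * ‖w‖ :=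
            mul_le_mul_of_nonneg_right (norm_pow_le_one hp N) (norm_nonneg w)
        _ = ‖w‖ := one_mul _
    calc ‖f p a (p ^ N * w) - 1‖ ≤ ‖p ^ N * w‖ * M := tail a hp hw hu
      _ = ‖p‖ ^ N * ‖w‖ * M := by rw [norm_mul, norm_pow]
  · have hpt : Tendsto (fun N : ℕ => ‖p‖ ^ N) atTop (𝓝 0) :=
      tendsto_pow_atTop_nhds_zero_of_lt_one (norm_nonneg p) hp
    have := (hpt.mul_const ‖w‖).mul_const M
    simpa using this

lemma hasProd_r (hp : ‖p‖ < 1) (hw : ‖w‖ < 1) :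
    HasProd (fun j : ℕ => (1 - a * w * p ^ j) / (1 - w * p ^ j)) (f p a w) := by
  have hwpj : ∀ j : ℕ, ‖w * p ^ j‖ < 1 := by
    intro j
    rw [norm_mul]
    calc ‖w‖ * ‖p ^ j‖ ≤ ‖w‖ * 1 :=
          mul_le_mul_of_nonneg_left (norm_pow_le_one hp j) (norm_nonneg w)
      _ = ‖w‖ := mul_one _
      _ < 1 := hw
  have hden : ∀ j : ℕ, (1 : ℂ) - w * p ^ j ≠ 0 := fun j => one_sub_ne_zero (hwpj j)
  by_cases hzero : ∃ j : ℕ, (1 : ℂ) - a * w * p ^ j = 0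
  · obtain ⟨j₀, hj₀⟩ := hzero
    have hfw : f p a w = 0 := by
      rw [iter a hp hw (j₀ + 1),
        Finset.prod_eq_zero (Finset.self_mem_range_succ j₀) (by rw [hj₀, zero_div]),
        zero_mul]
    rw [hfw]
    have hev : ∀ᶠ s : Finset ℕ in atTop,
        ∏ j ∈ s, ((1 - a * w * p ^ j) / (1 - w * p ^ j)) = 0 := by
      filter_upwards [Filter.eventually_ge_atTop ({j₀} : Finset ℕ)] with s hs
      exact Finset.prod_eq_zero (hs (Finset.mem_singleton_self j₀)) (by rw [hj₀, zero_div])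
    exact Tendsto.congr' (hev.mono fun s hs => hs.symm) tendsto_const_nhds
  · push_neg at hzero
    set r : ℕ → ℂ := fun j => (1 - a * w * p ^ j) / (1 - w * p ^ j) with hrdef
    have hrne : ∀ j, r j ≠ 0 := fun j => div_ne_zero (hzero j) (hden j)
    set s : ℕ → ℂ := fun j => w * p ^ j * (1 - a) / (1 - w * p ^ j) with hsdef
    have hrs : ∀ j, r j = 1 + s j := by
      intro j
      show (1 - a * w * p ^ j) / (1 - w * p ^ j) = 1 + w * p ^ j * (1 - a) / (1 - w * p ^ j)
      have hnum : (1 : ℂ) - a * w * p ^ j = (1 - w * p ^ j) + w * p ^ j * (1 - a) := by ring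
      rw [hnum, add_div, div_self (hden j)]
    set C : ℝ := ‖w‖ * ‖1 - a‖ / (1 - ‖w‖) with hC
    have hwpos : (0:ℝ) < 1 - ‖w‖ := by linarith
    have hsb : ∀ j, ‖s j‖ ≤ C * ‖p‖ ^ j := by
      intro j
      rw [hsdef]
      simp only [norm_div, norm_mul, norm_pow]
      rw [hC]
      have hd : 1 - ‖w‖ ≤ ‖1 - w * p ^ j‖ := by
        calc 1 - ‖w‖ ≤ 1 - ‖w * p ^ j‖ := by
              have : ‖w * p ^ j‖ ≤ ‖w‖ := by
                rw [norm_mul]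
                calc ‖w‖ * ‖p ^ j‖ ≤ ‖w‖ * 1 :=
                      mul_le_mul_of_nonneg_left (norm_pow_le_one hp j) (norm_nonneg w)
                  _ = ‖w‖ := mul_one _
              linarith
          _ ≤ ‖1 - w * p ^ j‖ := by
              have := norm_sub_norm_le (1 : ℂ) (w * p ^ j)
              simpa using this
      calc ‖w‖ * ‖p‖ ^ j * ‖1 - a‖ / ‖1 - w * p ^ j‖
          ≤ ‖w‖ * ‖p‖ ^ j * ‖1 - a‖ / (1 - ‖w‖) := by
            apply div_le_div_of_nonneg_left (by positivity) hwpos hd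
        _ = ‖w‖ * ‖1 - a‖ / (1 - ‖w‖) * ‖p‖ ^ j := by ring
    have hs0 : Tendsto (fun j : ℕ => C * ‖p‖ ^ j) atTop (𝓝 0) := by
      have := (tendsto_pow_atTop_nhds_zero_of_lt_one (norm_nonneg p) hp).const_mul C
      simpa using this
    have hev : ∀ᶠ j : ℕ in atTop, ‖s j‖ ≤ 1 / 2 := by
      filter_upwards [hs0.eventually_le_const (by norm_num : (0:ℝ) < 1/2)] with j hj
      exact le_trans (hsb j) hj
    have hlog : Summable (fun j : ℕ => Complex.log (r j)) := by
      apply Summable.of_norm_bounded_eventually_nat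
        (((summable_geometric_of_lt_one (norm_nonneg p) hp).mul_left C).mul_left (3/2))
      filter_upwards [hev] with j hj
      rw [hrs j]
      calc ‖Complex.log (1 + s j)‖ ≤ 3 / 2 * ‖s j‖ :=
            Complex.norm_log_one_add_half_le_self hj
        _ ≤ 3 / 2 * (C * ‖p‖ ^ j) := by
            apply mul_le_mul_of_nonneg_left (hsb j) (by norm_num)
    have hHP : HasProd r (∏' j : ℕ, r j) := by
      exact (Complex.multipliable_of_summable_log hlog).hasProd
    have h1 : Tendsto (fun N : ℕ => ∏ j ∈ Finset.range N, r j) atTop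
        (𝓝 (∏' j : ℕ, r j)) := hHP.tendsto_prod_nat
    have h2 : Tendsto (fun N : ℕ => (∏ j ∈ Finset.range N, r j) * f p a (p ^ N * w))
        atTop (𝓝 ((∏' j : ℕ, r j) * 1)) := h1.mul (tendsto_tail a hp hw)
    have h3 : (fun N : ℕ => (∏ j ∈ Finset.range N, r j) * f p a (p ^ N * w))
        = fun _ : ℕ => f p a w := funext fun N => (iter a hp hw N).symm
    have h4 : f p a w = (∏' j : ℕ, r j) * 1 := by
      apply tendsto_nhds_unique _ h2
      rw [h3]
      exact tendsto_const_nhds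
    rw [h4, mul_one]
    exact hHP

lemma multipliable_r (hp : ‖p‖ < 1) (hw : ‖w‖ < 1) :
    Multipliable (fun j : ℕ => (1 - a * w * p ^ j) / (1 - w * p ^ j)) :=
  ⟨f p a w, hasProd_r a hp hw⟩

lemma tsum_eq_tprod (hp : ‖p‖ < 1) (hw : ‖w‖ < 1) :
    ∑' n : ℕ, c p a n * w ^ n
      = ∏' j : ℕ, (1 - a * w * p ^ j) / (1 - w * p ^ j) :=
  ((hasProd_r a hp hw).tprod_eq).symm

lemma summable_norm (hp : ‖p‖ < 1) (hw : ‖w‖ < 1) :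
    Summable (fun n : ℕ => ‖c p a n * w ^ n‖) := by
  apply (summable_norm_full a hp hw).congr
  intro n
  rw [norm_mul, norm_pow]

end QB

namespace QGlue

lemma qpow_add (q : ℝ) (u v : ℂ) : qpow q (u + v) = qpow q u * qpow q v := by
  simp [qpow, add_mul, Complex.exp_add]

lemma qpow_ne_zero (q : ℝ) (u : ℂ) : qpow q u ≠ 0 := Complex.exp_ne_zero _

lemma qpow_two_nat {q : ℝ} (hq : 0 < q) (k : ℕ) :
    qpow q (2 * (k : ℂ)) = ((q : ℂ) ^ 2) ^ k := by
  rw [qpow]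
  have h1 : (2 * (k : ℂ)) * (Real.log q : ℂ) = ((2 * k : ℕ) : ℂ) * (Real.log q : ℂ) := by
    push_cast; ring
  have he : Complex.exp ((Real.log q : ℝ) : ℂ) = (q : ℂ) := by
    rw [← Complex.ofReal_exp, Real.exp_log hq]
  rw [h1, Complex.exp_nat_mul, he, pow_mul]

lemma cpow_q2 {q : ℝ} (hq : 0 < q) (β : ℂ) :
    (((q ^ 2 : ℝ)) : ℂ) ^ β = qpow q (2 * β) := by
  rw [Complex.cpow_def_of_ne_zero (Complex.ofReal_ne_zero.mpr (pow_pos hq 2).ne'),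
    ← Complex.ofReal_log (by positivity : (0:ℝ) ≤ q ^ 2), Real.log_pow, qpow]
  congr 1
  push_cast
  ring

lemma F0_monomial (q : ℝ) (hq : 0 < q) (lam z C β : ℂ) :
    F0op q hq lam z (fun y : PosR => C * (y.1 : ℂ) ^ β)
      = fun y : PosR =>
        (C * (-z⁻¹ * (qpow q (-2 * lam + 2 * β + 1) - qpow q (2 * lam + 1)) /
          ((q : ℂ) ^ 2 - 1))) * (y.1 : ℂ) ^ (β + 1) := by
  funext y
  simp only [F0op]
  have hsc : (((scaleUp q hq y).1 : ℝ) : ℂ) ^ β = qpow q (2 * β) * (y.1 : ℂ) ^ β := by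
    show (((q ^ 2 * y.1 : ℝ)) : ℂ) ^ β = _
    rw [Complex.ofReal_mul, Complex.mul_cpow_ofReal_nonneg (by positivity) y.2.le,
      cpow_q2 hq]
  rw [hsc]
  have hx : (y.1 : ℂ) ^ (β + 1) = (y.1 : ℂ) ^ β * (y.1 : ℂ) := by
    rw [Complex.cpow_add _ _ (Complex.ofReal_ne_zero.mpr y.2.ne'), Complex.cpow_one]
  rw [hx]
  have hq2 : qpow q (-2 * lam + 2 * β + 1) = qpow q (-2 * lam + 1) * qpow q (2 * β) := by
    rw [← qpow_add]; congr 1; ring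
  rw [hq2]
  ring

lemma F0_iter (q : ℝ) (hq : 0 < q) (lam z α : ℂ) (n : ℕ) :
    (F0op q hq lam z)^[n] (fun y : PosR => (y.1 : ℂ) ^ α)
      = fun y : PosR =>
        (∏ k ∈ Finset.range n,
          (-z⁻¹ * (qpow q (-2 * lam + 2 * (α + (k : ℂ)) + 1) - qpow q (2 * lam + 1)) /
            ((q : ℂ) ^ 2 - 1))) * (y.1 : ℂ) ^ (α + (n : ℂ)) := by
  induction n with
  | zero => funext y; simp
  | succ n ih =>
    rw [Function.iterate_succ_apply', ih, F0_monomial q hq lam z _ (α + (n : ℂ))]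
    funext y
    rw [Finset.prod_range_succ]
    have hcast : α + ((n + 1 : ℕ) : ℂ) = (α + (n : ℂ)) + 1 := by push_cast; ring
    rw [hcast]

lemma qfact_eq (q : ℝ) (n : ℕ) :
    qfact q n = ∏ k ∈ Finset.range n, qnum q (k + 1) := by
  induction n with
  | zero => simp [qfact]
  | succ n ih =>
    rw [qfact, Finset.prod_Icc_succ_top (Nat.le_add_left 1 n), ← qfact, ih,
      Finset.prod_range_succ]

end QGlue

namespace QGlue

open Filter Finset Topology

lemma key_term {q : ℝ} (hq : 0 < q) (hq1 : q < 1) (lam z : ℂ) (hz : z ≠ 0)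
    (α : ℂ) (x : PosR) (t : ℂ) (n : ℕ) :
    ((-t) ^ n / qfact q n) *
        ((F0op q hq lam z)^[n] (fun y : PosR => ((y.1 : ℂ)) ^ α) x)
      = ((x.1 : ℂ)) ^ α *
        (QB.c ((q : ℂ) ^ 2) (qpow q (-4 * lam + 2 * α)) n *
          (qpow q (2 * lam + 1) * t * (x.1 : ℂ) / z) ^ n) := by
  have hx0 : ((x.1 : ℝ) : ℂ) ≠ 0 := Complex.ofReal_ne_zero.mpr x.2.ne'
  have hPnorm : ‖((q : ℂ) ^ 2)‖ < 1 := by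
    rw [norm_pow, Complex.norm_real, Real.norm_of_nonneg hq.le]
    exact pow_lt_one₀ hq.le hq1 two_ne_zero
  have hP1 : ∀ k : ℕ, (1 : ℂ) - ((q : ℂ) ^ 2) ^ (k + 1) ≠ 0 :=
    fun k => QB.one_sub_ne_zero (QB.norm_pow_succ_lt_one hPnorm k)
  have hPne : (1 : ℂ) - (q : ℂ) ^ 2 ≠ 0 := by
    have := QB.one_sub_ne_zero hPnorm
    simpa using this
  have hq2ne : ((q : ℂ) ^ 2) - 1 ≠ 0 := by
    intro h; apply hPne; linear_combination -h
  have hqnum_eq : ∀ k : ℕ, qnum q (k + 1)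
      = (1 - ((q : ℂ) ^ 2) ^ (k + 1)) / (1 - (q : ℂ) ^ 2) := by
    intro k; rw [qnum, pow_mul]
  have hqnum_ne : ∀ k : ℕ, qnum q (k + 1) ≠ 0 := by
    intro k; rw [hqnum_eq k]; exact div_ne_zero (hP1 k) hPne
  have haQ : qpow q (-4 * lam + 2 * α) * qpow q (2 * lam + 1)
      = qpow q (-2 * lam + 2 * α + 1) := by
    rw [← qpow_add]; congr 1; ring
  have hQk : ∀ k : ℕ, qpow q (-2 * lam + 2 * (α + (k : ℂ)) + 1)
      = qpow q (-2 * lam + 2 * α + 1) * ((q : ℂ) ^ 2) ^ k := by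
    intro k
    rw [show (-2 * lam + 2 * (α + (k : ℂ)) + 1) = (-2 * lam + 2 * α + 1) + 2 * (k : ℂ) by
      ring, qpow_add, qpow_two_nat hq]
  rw [F0_iter q hq lam z α n]
  simp only []
  have hxan : ((x.1 : ℂ)) ^ (α + (n : ℂ)) = ((x.1 : ℂ)) ^ α * ((x.1 : ℂ)) ^ n := by
    rw [Complex.cpow_add _ _ hx0, Complex.cpow_natCast]
  rw [hxan, qfact_eq]
  generalize hgen : ((q : ℂ) ^ 2) = P at hP1 hPne hq2ne hqnum_eq hQk ⊢
  have hfac : ∀ k ∈ Finset.range n,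
      (-t) * (-z⁻¹ * (qpow q (-2 * lam + 2 * (α + (k : ℂ)) + 1) - qpow q (2 * lam + 1)) /
          (P - 1)) * ((x.1 : ℂ)) / qnum q (k + 1)
        = (1 - qpow q (-4 * lam + 2 * α) * P ^ k) / (1 - P ^ (k + 1)) *
          (qpow q (2 * lam + 1) * t * (x.1 : ℂ) / z) := by
    intro k _
    rw [hQk k, ← haQ, hqnum_eq k]
    have h1 : (P - 1) * (P - 1)⁻¹ = 1 := mul_inv_cancel₀ hq2ne
    simp only [div_eq_mul_inv, mul_inv, inv_inv]
    linear_combination (t * qpow q (2 * lam + 1) *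
      (1 - qpow q (-4 * lam + 2 * α) * P ^ k) * ((x.1 : ℂ)) * z⁻¹ *
      (1 - P ^ (k + 1))⁻¹) * h1
  have hsplit : ∏ k ∈ Finset.range n,
      ((-t) * (-z⁻¹ * (qpow q (-2 * lam + 2 * (α + (k : ℂ)) + 1) - qpow q (2 * lam + 1)) /
          (P - 1)) * ((x.1 : ℂ)) / qnum q (k + 1))
      = ((-t) ^ n *
          (∏ k ∈ Finset.range n,
            (-z⁻¹ * (qpow q (-2 * lam + 2 * (α + (k : ℂ)) + 1) - qpow q (2 * lam + 1)) /
              (P - 1))) * ((x.1 : ℂ)) ^ n) /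
        ∏ k ∈ Finset.range n, qnum q (k + 1) := by
    rw [Finset.prod_div_distrib, Finset.prod_mul_distrib, Finset.prod_mul_distrib,
      Finset.prod_const, Finset.prod_const, Finset.card_range]
  have hsplit2 : ∏ k ∈ Finset.range n,
      ((1 - qpow q (-4 * lam + 2 * α) * P ^ k) / (1 - P ^ (k + 1)) *
        (qpow q (2 * lam + 1) * t * (x.1 : ℂ) / z))
      = QB.c P (qpow q (-4 * lam + 2 * α)) n *
          (qpow q (2 * lam + 1) * t * (x.1 : ℂ) / z) ^ n := by
    rw [Finset.prod_mul_distrib, Finset.prod_const, Finset.card_range, QB.c]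
  rw [← hsplit2, ← Finset.prod_congr rfl hfac, hsplit]
  ring

end QGlue


/-- `exp_q(-tF₀) x^α = x^α (q^{-2λ+2α+1} t x/z; q²)_∞ / (q^{2λ+1} t x/z; q²)_∞`:
for `|q^{2λ+1}| |t| x/|z| < 1` the series `∑ ((-t)^n/[n]_q!) (F₀^n p_α)(x)`
converges absolutely and equals
`x^α ∏_{j≥0} (1 - q^{-2λ+2α+1+2j} t x/z)/(1 - q^{2λ+1+2j} t x/z)`. -/
theorem stmt_12 (q : ℝ) (hq : 0 < q) (hq1 : q < 1) (lam z : ℂ) (hz : z ≠ 0)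
    (α : ℂ) (x : PosR) (t : ℂ)
    (ht : ‖qpow q (2 * lam + 1)‖ * ‖t‖ * x.1 /
        ‖z‖ < 1) :
    Summable (fun n : ℕ =>
      ‖((-t) ^ n / qfact q n) *
        ((F0op q hq lam z)^[n] (fun y : PosR => ((y.1 : ℂ)) ^ α) x)‖) ∧
    Multipliable (fun j : ℕ =>
      (1 - qpow q (-2 * lam + 2 * α + 1 + 2 * (j : ℂ)) * t * (x.1 : ℂ) / z) /
        (1 - qpow q (2 * lam + 1 + 2 * (j : ℂ)) * t * (x.1 : ℂ) / z)) ∧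
    ∑' n : ℕ, ((-t) ^ n / qfact q n) *
        ((F0op q hq lam z)^[n] (fun y : PosR => ((y.1 : ℂ)) ^ α) x)
      = ((x.1 : ℂ)) ^ α *
          ∏' j : ℕ,
            (1 - qpow q (-2 * lam + 2 * α + 1 + 2 * (j : ℂ)) * t * (x.1 : ℂ) / z) /
              (1 - qpow q (2 * lam + 1 + 2 * (j : ℂ)) * t * (x.1 : ℂ) / z) := by
  have hPnorm : ‖((q : ℂ) ^ 2)‖ < 1 := by
    rw [norm_pow, Complex.norm_real, Real.norm_of_nonneg hq.le]
    exact pow_lt_one₀ hq.le hq1 two_ne_zero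
  have hwnorm : ‖qpow q (2 * lam + 1) * t * (x.1 : ℂ) / z‖ < 1 := by
    have heq : ‖qpow q (2 * lam + 1) * t * (x.1 : ℂ) / z‖
        = ‖qpow q (2 * lam + 1)‖ * ‖t‖ * x.1 / ‖z‖ := by
      simp only [norm_div, norm_mul, Complex.norm_real, Real.norm_eq_abs,
        abs_of_pos x.2]
    rw [heq]; exact ht
  have haQ : qpow q (-4 * lam + 2 * α) * qpow q (2 * lam + 1)
      = qpow q (-2 * lam + 2 * α + 1) := by
    rw [← QGlue.qpow_add]; congr 1; ring
  have hfactor : ∀ j : ℕ,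
      (1 - qpow q (-4 * lam + 2 * α) * (qpow q (2 * lam + 1) * t * (x.1 : ℂ) / z) *
          ((q : ℂ) ^ 2) ^ j) /
        (1 - (qpow q (2 * lam + 1) * t * (x.1 : ℂ) / z) * ((q : ℂ) ^ 2) ^ j)
      = (1 - qpow q (-2 * lam + 2 * α + 1 + 2 * (j : ℂ)) * t * (x.1 : ℂ) / z) /
          (1 - qpow q (2 * lam + 1 + 2 * (j : ℂ)) * t * (x.1 : ℂ) / z) := by
    intro j
    have h1 : qpow q (-2 * lam + 2 * α + 1 + 2 * (j : ℂ))
        = qpow q (-2 * lam + 2 * α + 1) * ((q : ℂ) ^ 2) ^ j := by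
      rw [show (-2 * lam + 2 * α + 1 + 2 * (j : ℂ))
          = (-2 * lam + 2 * α + 1) + 2 * (j : ℂ) by ring,
        QGlue.qpow_add, QGlue.qpow_two_nat hq]
    have h2 : qpow q (2 * lam + 1 + 2 * (j : ℂ))
        = qpow q (2 * lam + 1) * ((q : ℂ) ^ 2) ^ j := by
      rw [show (2 * lam + 1 + 2 * (j : ℂ)) = (2 * lam + 1) + 2 * (j : ℂ) by ring,
        QGlue.qpow_add, QGlue.qpow_two_nat hq]
    rw [h1, h2]
    congr 1
    · rw [← haQ]; ring
    · ring
  have key := QGlue.key_term hq hq1 lam z hz α x t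
  refine ⟨?_, ?_, ?_⟩
  · apply Summable.congr
      (((QB.summable_norm (qpow q (-4 * lam + 2 * α)) hPnorm hwnorm).mul_left
        ‖((x.1 : ℂ)) ^ α‖))
    intro n
    rw [← norm_mul, ← key n]
  · exact (QB.multipliable_r (qpow q (-4 * lam + 2 * α)) hPnorm hwnorm).congr hfactor
  · rw [tsum_congr key, tsum_mul_left,
      QB.tsum_eq_tprod (qpow q (-4 * lam + 2 * α)) hPnorm hwnorm,
      tprod_congr hfactor]
end
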